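/- arXiv:2207.05181 — 4 statements merged into one kernel-verified Lean document; each statement's English description precedes it below -/
import Mathlib

section
/- Let M be an n×n normal matrix with eigenvalues λ₁ ≥ ... ≥ λₙ (real spectrum, e.g. Hermitian). Then λ₁ - λₙ ≤ (2‖M‖_F² - (2/n)(tr M)²)^{1/2}, where ‖M‖_F is the Frobenius norm. -/
open Matrix BigOperators

/-!
With `a`, `b` indices of a largest and a smallest eigenvalue and any `c`,
`(λ_a - λ_b)² = 2((λ_a - c)² + (λ_b - c)²) - (λ_a + λ_b - 2c)² ≤ 2 ∑ (λ_i - c)²`.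
For `c` the mean of the eigenvalues the right side is `2 ∑ λ_i² - (2/n) (∑ λ_i)²`, and the spectral
theorem turns `∑ λ_i²` into `tr (Mᴴ M) = ‖M‖_F²` and `∑ λ_i` into `tr M`.
-/

section Spread

variable {ι : Type*} [Fintype ι]

theorem sq_sub_le_two_mul_sum_sq_sub (μ : ι → ℝ) (a b : ι) (c : ℝ) :
    (μ a - μ b) ^ 2 ≤ 2 * ∑ i, (μ i - c) ^ 2 := by
  rcases eq_or_ne a b with rfl | hab
  · rw [sub_self, zero_pow two_ne_zero]
    positivity
  have hpair : (μ a - c) ^ 2 + (μ b - c) ^ 2 ≤ ∑ i, (μ i - c) ^ 2 := by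
    classical
    rw [← Finset.sum_pair (f := fun i ↦ (μ i - c) ^ 2) hab]
    exact Finset.sum_le_univ_sum_of_nonneg fun i ↦ sq_nonneg _
  nlinarith [sq_nonneg (μ a + μ b - 2 * c)]

theorem sum_sq_sub_mean (μ : ι → ℝ) :
    ∑ i, (μ i - (∑ j, μ j) / Fintype.card ι) ^ 2 =
      ∑ i, μ i ^ 2 - (∑ i, μ i) ^ 2 / Fintype.card ι := by
  rcases isEmpty_or_nonempty ι with _ | _
  · simp
  have hcard : (Fintype.card ι : ℝ) ≠ 0 := Nat.cast_ne_zero.2 Fintype.card_ne_zero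
  simp only [sub_sq, Finset.sum_add_distrib, Finset.sum_sub_distrib, ← Finset.sum_mul,
    ← Finset.mul_sum, Finset.sum_const, Finset.card_univ, nsmul_eq_mul]
  field_simp
  ring

theorem ciSup_sub_ciInf_le_mirsky_bound (μ : ι → ℝ) :
    (⨆ i, μ i) - (⨅ i, μ i) ≤
      √(2 * ∑ i, μ i ^ 2 - (2 / Fintype.card ι) * (∑ i, μ i) ^ 2) := by
  rcases isEmpty_or_nonempty ι with _ | _
  · simp
  obtain ⟨a, ha⟩ := Finite.exists_max μ
  obtain ⟨b, hb⟩ := Finite.exists_min μ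
  have hsup : (⨆ i, μ i) = μ a := le_antisymm (ciSup_le ha) (le_ciSup (Finite.bddAbove_range μ) a)
  have hinf : (⨅ i, μ i) = μ b := le_antisymm (ciInf_le (Finite.bddBelow_range μ) b) (le_ciInf hb)
  rw [hsup, hinf]
  apply Real.le_sqrt_of_sq_le
  calc (μ a - μ b) ^ 2 ≤ 2 * ∑ i, (μ i - (∑ j, μ j) / Fintype.card ι) ^ 2 :=
        sq_sub_le_two_mul_sum_sq_sub μ a b _
    _ = _ := by rw [sum_sq_sub_mean]; ring

end Spread

namespace Matrix

variable {𝕜 : Type*} [RCLike 𝕜] {m n : Type*} [Fintype m] [Fintype n]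

theorem re_trace_conjTranspose_mul_self (A : Matrix m n 𝕜) :
    RCLike.re (Aᴴ * A).trace = ∑ i, ∑ j, ‖A i j‖ ^ 2 := by
  simp only [trace, diag, mul_apply, conjTranspose_apply, RCLike.star_def, RCLike.conj_mul]
  rw [Finset.sum_comm]
  simp only [← RCLike.ofReal_pow, ← map_sum, RCLike.ofReal_re]

variable [DecidableEq n] {A : Matrix n n 𝕜}

theorem IsHermitian.trace_mul_self (hA : A.IsHermitian) :
    (A * A).trace = ∑ i, (hA.eigenvalues i : 𝕜) ^ 2 := by
  conv_lhs => rw [hA.spectral_theorem, ← map_mul, Unitary.conjStarAlgAut_apply, trace_mul_cycle,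
    Unitary.coe_star_mul_self, one_mul, diagonal_mul_diagonal, trace_diagonal]
  simp [sq]

theorem IsHermitian.sum_sq_norm_eq_sum_sq_eigenvalues (hA : A.IsHermitian) :
    ∑ i, ∑ j, ‖A i j‖ ^ 2 = ∑ i, hA.eigenvalues i ^ 2 := by
  rw [← re_trace_conjTranspose_mul_self, hA.eq, hA.trace_mul_self]
  simp only [← RCLike.ofReal_pow, ← map_sum, RCLike.ofReal_re]

theorem IsHermitian.re_trace_eq_sum_eigenvalues (hA : A.IsHermitian) :
    RCLike.re A.trace = ∑ i, hA.eigenvalues i := by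
  simp [hA.trace_eq_sum_eigenvalues]

end Matrix

theorem spread_le_mirsky_general {n : ℕ} (M : Matrix (Fin n) (Fin n) ℂ)
    (hM : M.IsHermitian) :
    (⨆ i, hM.eigenvalues i) - (⨅ i, hM.eigenvalues i) ≤
      Real.sqrt (2 * ∑ i, ∑ j, ‖M i j‖ ^ 2 - (2 / n) * (M.trace.re) ^ 2) := by
  have h := ciSup_sub_ciInf_le_mirsky_bound hM.eigenvalues
  rwa [Fintype.card_fin, ← hM.sum_sq_norm_eq_sum_sq_eigenvalues,
    ← hM.re_trace_eq_sum_eigenvalues] at h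

/-- **Mirsky's spread bound.** For an `n × n` Hermitian matrix `M` (a normal matrix with real
spectrum), the spread `λ₁ - λₙ` is at most `(2‖M‖_F² - (2/n)(tr M)²)^{1/2}`. -/
theorem spread_le_mirsky {n : ℕ} (hn : 0 < n) (M : Matrix (Fin n) (Fin n) ℂ)
    (hM : M.IsHermitian) :
    (⨆ i, hM.eigenvalues i) - (⨅ i, hM.eigenvalues i) ≤
      Real.sqrt (2 * ∑ i, ∑ j, ‖M i j‖ ^ 2 - (2 / n) * (M.trace.re) ^ 2) :=
  spread_le_mirsky_general M hM
end

section
/- Let G be a connected graph on n ≥ 2 vertices with Harary index H(G) and α ∈ [0,1). Then S_{RD_α}(G) ≥ 2(1-α)H(G)/(n-1), with equality if and only if G ≅ K_n. -/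
open Matrix BigOperators Finset

set_option linter.unusedSectionVars false
set_option maxHeartbeats 1000000

variable {V : Type*} [Fintype V] [DecidableEq V]

/-- Reciprocal distance (Harary) matrix. -/
noncomputable def RD (G : SimpleGraph V) : Matrix V V ℝ :=
  Matrix.of fun i j => if i = j then 0 else (1 : ℝ) / (G.dist i j)

/-- Reciprocal transmission of a vertex. -/
noncomputable def RTr (G : SimpleGraph V) (i : V) : ℝ := ∑ j, RD G i j

/-- Generalized reciprocal distance matrix. -/
noncomputable def RDa (α : ℝ) (G : SimpleGraph V) : Matrix V V ℝ :=
  α • Matrix.diagonal (RTr G) + (1 - α) • RD G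

/-- Harary index. -/
noncomputable def harary (G : SimpleGraph V) : ℝ := (∑ i, RTr G i) / 2

/-- Reciprocal transmission regular graph. -/
def TransRegular (G : SimpleGraph V) : Prop := ∀ i j : V, RTr G i = RTr G j

noncomputable def maxEig {M : Matrix V V ℝ} (hM : M.IsHermitian) : ℝ := ⨆ i, hM.eigenvalues i

noncomputable def minEig {M : Matrix V V ℝ} (hM : M.IsHermitian) : ℝ := ⨅ i, hM.eigenvalues i

/-- Spread of a real symmetric matrix. -/
noncomputable def spread {M : Matrix V V ℝ} (hM : M.IsHermitian) : ℝ := maxEig hM - minEig hM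

section Helpers
variable {M : Matrix V V ℝ} (hM : M.IsHermitian)

lemma row_orth (i j : V) :
    ∑ k, (hM.eigenvectorUnitary : Matrix V V ℝ) i k * (hM.eigenvectorUnitary : Matrix V V ℝ) j k
      = if i = j then 1 else 0 := by
  have h : (hM.eigenvectorUnitary : Matrix V V ℝ) * star (hM.eigenvectorUnitary : Matrix V V ℝ) = 1 :=
    (Matrix.mem_unitaryGroup_iff).mp hM.eigenvectorUnitary.2
  have := congrFun (congrFun h i) j
  simpa [Matrix.mul_apply, Matrix.one_apply, Matrix.star_apply] using this

lemma col_orth (k l : V) :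
    ∑ i, (hM.eigenvectorUnitary : Matrix V V ℝ) i k * (hM.eigenvectorUnitary : Matrix V V ℝ) i l
      = if k = l then 1 else 0 := by
  have h : star (hM.eigenvectorUnitary : Matrix V V ℝ) * (hM.eigenvectorUnitary : Matrix V V ℝ) = 1 :=
    (Matrix.mem_unitaryGroup_iff').mp hM.eigenvectorUnitary.2
  have := congrFun (congrFun h k) l
  simpa [Matrix.mul_apply, Matrix.one_apply, Matrix.star_apply] using this

lemma entry_eq (i j : V) :
    M i j = ∑ k, (hM.eigenvectorUnitary : Matrix V V ℝ) i k * hM.eigenvalues k *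
      (hM.eigenvectorUnitary : Matrix V V ℝ) j k := by
  conv_lhs => rw [hM.spectral_theorem]
  simp [Matrix.mul_apply, Matrix.diagonal_apply, Matrix.star_apply, Finset.sum_ite_eq,
    RCLike.ofReal_real_eq_id, Finset.mul_sum, Finset.sum_mul]

lemma quad_eq (x : V → ℝ) :
    ∑ i, ∑ j, x i * M i j * x j
      = ∑ k, hM.eigenvalues k * (∑ i, (hM.eigenvectorUnitary : Matrix V V ℝ) i k * x i) ^ 2 := by
  set U : Matrix V V ℝ := (hM.eigenvectorUnitary : Matrix V V ℝ) with hU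
  calc ∑ i, ∑ j, x i * M i j * x j
      = ∑ i, ∑ j, ∑ k, x i * (U i k * hM.eigenvalues k * U j k) * x j := by
        refine Finset.sum_congr rfl fun i _ => Finset.sum_congr rfl fun j _ => ?_
        rw [entry_eq hM i j, Finset.mul_sum, Finset.sum_mul]
    _ = ∑ i, ∑ k, ∑ j, x i * (U i k * hM.eigenvalues k * U j k) * x j :=
        Finset.sum_congr rfl fun i _ => Finset.sum_comm
    _ = ∑ k, ∑ i, ∑ j, x i * (U i k * hM.eigenvalues k * U j k) * x j :=
        Finset.sum_comm
    _ = ∑ k, hM.eigenvalues k * (∑ i, U i k * x i) ^ 2 := by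
        refine Finset.sum_congr rfl fun k _ => ?_
        rw [sq, Finset.sum_mul_sum, Finset.mul_sum]
        refine Finset.sum_congr rfl fun i _ => ?_
        rw [Finset.mul_sum]
        exact Finset.sum_congr rfl fun j _ => by ring

lemma norm_eq (x : V → ℝ) :
    ∑ i, (x i) ^ 2
      = ∑ k, (∑ i, (hM.eigenvectorUnitary : Matrix V V ℝ) i k * x i) ^ 2 := by
  set U : Matrix V V ℝ := (hM.eigenvectorUnitary : Matrix V V ℝ) with hU
  symm
  calc ∑ k, (∑ i, U i k * x i) ^ 2
      = ∑ k, ∑ i, ∑ j, (U i k * x i) * (U j k * x j) := by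
        refine Finset.sum_congr rfl fun k _ => ?_
        rw [sq, Finset.sum_mul_sum]
    _ = ∑ i, ∑ k, ∑ j, (U i k * x i) * (U j k * x j) := Finset.sum_comm
    _ = ∑ i, ∑ j, ∑ k, (U i k * x i) * (U j k * x j) :=
        Finset.sum_congr rfl fun i _ => Finset.sum_comm
    _ = ∑ i, ∑ j, (x i * x j) * ∑ k, U i k * U j k := by
        refine Finset.sum_congr rfl fun i _ => Finset.sum_congr rfl fun j _ => ?_
        rw [Finset.mul_sum]
        exact Finset.sum_congr rfl fun k _ => by ring
    _ = ∑ i, (x i) ^ 2 := by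
        refine Finset.sum_congr rfl fun i _ => ?_
        rw [Finset.sum_congr rfl fun j _ => by rw [row_orth hM i j]]
        simp [mul_ite, Finset.sum_ite_eq]
        ring

lemma recon_eq (x : V → ℝ) (j : V) :
    x j = ∑ k, (hM.eigenvectorUnitary : Matrix V V ℝ) j k *
      (∑ i, (hM.eigenvectorUnitary : Matrix V V ℝ) i k * x i) := by
  set U : Matrix V V ℝ := (hM.eigenvectorUnitary : Matrix V V ℝ) with hU
  symm
  calc ∑ k, U j k * ∑ i, U i k * x i
      = ∑ k, ∑ i, x i * (U j k * U i k) := by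
        refine Finset.sum_congr rfl fun k _ => ?_
        rw [Finset.mul_sum]
        exact Finset.sum_congr rfl fun i _ => by ring
    _ = ∑ i, x i * ∑ k, U j k * U i k := by
        rw [Finset.sum_comm]
        simp [Finset.mul_sum]
    _ = x j := by
        rw [Finset.sum_congr rfl fun i _ => by rw [row_orth hM j i]]
        simp [mul_ite, Finset.sum_ite_eq]

lemma trace_eq_sum_eig : M.trace = ∑ k, hM.eigenvalues k := by
  set U : Matrix V V ℝ := (hM.eigenvectorUnitary : Matrix V V ℝ) with hU
  calc M.trace = ∑ i, ∑ k, U i k * hM.eigenvalues k * U i k :=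
        Finset.sum_congr rfl fun i _ => entry_eq hM i i
    _ = ∑ k, ∑ i, U i k * hM.eigenvalues k * U i k := Finset.sum_comm
    _ = ∑ k, hM.eigenvalues k := by
        refine Finset.sum_congr rfl fun k _ => ?_
        have h1 : ∑ i, U i k * hM.eigenvalues k * U i k
            = hM.eigenvalues k * ∑ i, U i k * U i k := by
          rw [Finset.mul_sum]
          exact Finset.sum_congr rfl fun i _ => by ring
        rw [h1, col_orth hM k k]
        simp

end Helpers

section GraphLemmas
variable {G : SimpleGraph V}

lemma RD_apply (i j : V) : RD G i j = if i = j then 0 else (1 : ℝ) / (G.dist i j) := rfl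

lemma RD_nonneg (i j : V) : 0 ≤ RD G i j := by
  rw [RD_apply]; split <;> positivity

lemma RD_pos (hG : G.Connected) {i j : V} (hij : i ≠ j) : 0 < RD G i j := by
  rw [RD_apply, if_neg hij]
  have hd : 0 < G.dist i j := hG.pos_dist_of_ne hij
  positivity

lemma RTr_pos [Nontrivial V] (hG : G.Connected) (i : V) : 0 < RTr G i := by
  obtain ⟨j, hj⟩ := exists_ne i
  exact Finset.sum_pos' (fun j _ => RD_nonneg i j)
    ⟨j, Finset.mem_univ j, RD_pos hG (Ne.symm hj)⟩

lemma RDa_apply_ne (α : ℝ) {i j : V} (hij : i ≠ j) :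
    RDa α G i j = (1 - α) * ((1 : ℝ) / (G.dist i j)) := by
  simp [RDa, Matrix.diagonal_apply, hij, RD_apply]

lemma RDa_apply_eq (α : ℝ) (i : V) : RDa α G i i = α * RTr G i := by
  simp [RDa, Matrix.diagonal_apply, RD_apply]

lemma RDa_row_sum (α : ℝ) (i : V) : ∑ j, RDa α G i j = RTr G i := by
  have h : ∀ j, RDa α G i j = α * (if i = j then RTr G i else 0) + (1 - α) * RD G i j := by
    intro j
    by_cases h : i = j
    · subst h; simp [RDa_apply_eq, RD_apply]
    · simp [RDa_apply_ne α h, h, RD_apply, if_neg h]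
  rw [Finset.sum_congr rfl fun j _ => h j, Finset.sum_add_distrib, ← Finset.mul_sum,
    ← Finset.mul_sum, Finset.sum_ite_eq, if_pos (Finset.mem_univ i)]
  rw [show (∑ j, RD G i j) = RTr G i from rfl]
  ring

lemma RDa_trace (α : ℝ) : (RDa α G).trace = α * ∑ i, RTr G i := by
  rw [Matrix.trace, Finset.mul_sum]
  exact Finset.sum_congr rfl fun i _ => RDa_apply_eq α i

lemma RDa_quad_sum (α : ℝ) : ∑ i, ∑ j, (1:ℝ) * RDa α G i j * 1 = ∑ i, RTr G i := by
  refine Finset.sum_congr rfl fun i _ => ?_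
  rw [← RDa_row_sum α i]
  exact Finset.sum_congr rfl fun j _ => by ring

end GraphLemmas

/-- Lower bound for the `RD_α`-spread: `S_{RD_α}(G) ≥ 2(1-α)H(G)/(n-1)`, with equality iff
`G ≅ K_n` (Theorem 2.6 (i)). -/
theorem RDa_spread_lower_harary {n : ℕ} (hn : 2 ≤ n) (G : SimpleGraph (Fin n))
    (hG : G.Connected) (α : ℝ) (hα : α ∈ Set.Ico (0 : ℝ) 1) (hH : (RDa α G).IsHermitian) :
    2 * (1 - α) * harary G / (n - 1) ≤ spread hH ∧
    (spread hH = 2 * (1 - α) * harary G / (n - 1) ↔ G = (⊤ : SimpleGraph (Fin n))) := by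
  classical
  obtain ⟨hα0, hα1⟩ := hα
  haveI : Nontrivial (Fin n) := Fin.nontrivial_iff_two_le.mpr hn
  have hn2 : (2:ℝ) ≤ (n:ℝ) := by exact_mod_cast hn
  have hNpos : (0:ℝ) < (n:ℝ) - 1 := by linarith
  have hNne : ((n:ℝ) - 1) ≠ 0 := ne_of_gt hNpos
  set μ : Fin n → ℝ := hH.eigenvalues with hμdef
  set U : Matrix (Fin n) (Fin n) ℝ := (hH.eigenvectorUnitary : Matrix (Fin n) (Fin n) ℝ) with hUdef
  set T : ℝ := ∑ i, RTr G i with hTdef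
  have hTpos : 0 < T := Finset.sum_pos (fun i _ => RTr_pos hG i) Finset.univ_nonempty
  have hhar : harary G = T / 2 := rfl
  have hbddA : BddAbove (Set.range μ) := Set.Finite.bddAbove (Set.finite_range μ)
  have hbddB : BddBelow (Set.range μ) := Set.Finite.bddBelow (Set.finite_range μ)
  obtain ⟨i₀, hi₀⟩ := Finite.exists_max μ
  set A : ℝ := maxEig hH with hAdef
  set B : ℝ := minEig hH with hBdef
  have hA : A = μ i₀ := le_antisymm (ciSup_le hi₀) (le_ciSup hbddA i₀)
  have hAk : ∀ k, μ k ≤ A := fun k => hA ▸ hi₀ k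
  have hBk : ∀ k, B ≤ μ k := fun k => ciInf_le hbddB k
  have hquad : T = ∑ k, μ k * (∑ i, U i k * 1) ^ 2 := by
    rw [hTdef, ← RDa_quad_sum α (G := G)]
    exact quad_eq hH fun _ => 1
  have hnorm : (n : ℝ) = ∑ k, (∑ i, U i k * 1) ^ 2 := by
    have h := norm_eq hH (fun _ => (1:ℝ))
    rw [show (∑ k, (∑ i, U i k * 1) ^ 2 : ℝ) = ∑ i : Fin n, ((1:ℝ)) ^ 2 from h.symm]
    simp
  have key1 : T ≤ (n : ℝ) * A := by
    have h1 : ∑ k, μ k * (∑ i, U i k * 1) ^ 2 ≤ ∑ k, A * (∑ i, U i k * 1) ^ 2 :=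
      Finset.sum_le_sum fun k _ => mul_le_mul_of_nonneg_right (hAk k) (sq_nonneg _)
    rw [← Finset.mul_sum, ← hnorm] at h1
    calc T = ∑ k, μ k * (∑ i, U i k * 1) ^ 2 := hquad
      _ ≤ A * n := h1
      _ = (n : ℝ) * A := mul_comm _ _
  have htr : ∑ k, μ k = α * T := by
    rw [← trace_eq_sum_eig hH, RDa_trace]
  have hsplit : μ i₀ + ∑ k ∈ Finset.univ.erase i₀, μ k = ∑ k, μ k :=
    Finset.add_sum_erase _ _ (Finset.mem_univ i₀)
  have hcast : ((n - 1 : ℕ) : ℝ) = (n : ℝ) - 1 := by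
    have : 1 ≤ n := by omega
    push_cast [this]
    ring
  have hcard : ((Finset.univ.erase i₀).card : ℝ) = (n : ℝ) - 1 := by
    rw [Finset.card_erase_of_mem (Finset.mem_univ i₀)]
    simp [hcast]
  have key2 : A + ((n:ℝ) - 1) * B ≤ α * T := by
    have h1 : ∑ k ∈ Finset.univ.erase i₀, B ≤ ∑ k ∈ Finset.univ.erase i₀, μ k :=
      Finset.sum_le_sum fun k _ => hBk k
    rw [Finset.sum_const, nsmul_eq_mul] at h1
    rw [hcard] at h1
    rw [← htr, ← hsplit, ← hA]
    linarith
  have main : 2 * (1 - α) * harary G / ((n:ℝ) - 1) ≤ A - B := by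
    rw [hhar, div_le_iff₀ hNpos]
    nlinarith [key1, key2]
  constructor
  · exact main
  constructor
  · -- equality implies complete
    intro heq
    have hsp : spread hH = A - B := rfl
    rw [hsp, hhar] at heq
    have eq0 : (A - B) * ((n:ℝ) - 1) = (1 - α) * T := by
      field_simp at heq
      linarith
    have e1 : (n:ℝ) * A = T := by nlinarith [key1, key2, eq0]
    have e2 : α * T = A + ((n:ℝ) - 1) * B := by linear_combination eq0 - e1
    have hABlt : B < A := by
      nlinarith [mul_pos (by linarith : (0:ℝ) < 1 - α) hTpos, eq0]
    have hmin : ∀ k ∈ Finset.univ.erase i₀, μ k = B := by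
      have hsum1 : ∑ k ∈ Finset.univ.erase i₀, μ k = α * T - A := by
        linarith [hsplit, htr, hA]
      have hsum0 : ∑ k ∈ Finset.univ.erase i₀, (μ k - B) = 0 := by
        rw [Finset.sum_sub_distrib, Finset.sum_const, nsmul_eq_mul, hcard, hsum1]
        linarith
      intro k hk
      have h := (Finset.sum_eq_zero_iff_of_nonneg
        (fun k _ => sub_nonneg.2 (hBk k))).mp hsum0 k hk
      linarith
    have hray : ∑ k, (A - μ k) * (∑ i, U i k * 1) ^ 2 = 0 := by
      rw [Finset.sum_congr rfl fun k (_ : k ∈ univ) => (by ring :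
          (A - μ k) * (∑ i, U i k * 1) ^ 2
            = A * (∑ i, U i k * 1) ^ 2 - μ k * (∑ i, U i k * 1) ^ 2),
        Finset.sum_sub_distrib, ← Finset.mul_sum, ← hnorm, ← hquad]
      linarith
    have hzero : ∀ k, (A - μ k) * (∑ i, U i k * 1) ^ 2 = 0 := fun k =>
      (Finset.sum_eq_zero_iff_of_nonneg
        (fun k _ => mul_nonneg (by linarith [hAk k]) (sq_nonneg _))).mp hray k (Finset.mem_univ k)
    have hy0 : ∀ k, k ≠ i₀ → (∑ i, U i k * 1) = 0 := by
      intro k hk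
      have hmuk : μ k = B := hmin k (Finset.mem_erase.mpr ⟨hk, Finset.mem_univ k⟩)
      have hne : A - μ k ≠ 0 := by rw [hmuk]; linarith
      have h2 := (mul_eq_zero.mp (hzero k)).resolve_left hne
      exact pow_eq_zero_iff (by norm_num : (2:ℕ) ≠ 0) |>.mp h2
    have hrec : ∀ j, U j i₀ * (∑ i, U i i₀ * 1) = 1 := by
      intro j
      have h := recon_eq hH (fun _ => (1:ℝ)) j
      rw [Finset.sum_eq_single i₀ (fun k _ hk => by rw [hy0 k hk, mul_zero]) (by simp)] at h
      exact h.symm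
    have hyne : (∑ i, U i i₀ * 1) ≠ 0 := by
      intro h0
      have h := hrec i₀
      rw [h0, mul_zero] at h
      norm_num at h
    have hMc : ∀ i j, i ≠ j → RDa α G i j * (∑ i', U i' i₀ * 1) ^ 2 = A - B := by
      intro i j hij
      have he : RDa α G i j = (A - B) * (U i i₀ * U j i₀) := by
        rw [entry_eq hH i j]
        have hterm : ∀ k, U i k * hH.eigenvalues k * U j k
            = B * (U i k * U j k)
              + (if k = i₀ then (A - B) * (U i i₀ * U j i₀) else 0) := by
          intro k
          rw [show hH.eigenvalues k = μ k from rfl]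
          by_cases hk : k = i₀
          · subst hk
            rw [if_pos rfl, ← hA]
            ring
          · rw [if_neg hk, hmin k (Finset.mem_erase.mpr ⟨hk, Finset.mem_univ k⟩)]
            ring
        rw [Finset.sum_congr rfl fun k _ => hterm k, Finset.sum_add_distrib, ← Finset.mul_sum,
          row_orth hH i j, if_neg hij, mul_zero, zero_add,
          Finset.sum_ite_eq' univ i₀ (fun _ => (A - B) * (U i i₀ * U j i₀)),
          if_pos (Finset.mem_univ i₀)]
      rw [he]
      calc (A - B) * (U i i₀ * U j i₀) * (∑ i', U i' i₀ * 1) ^ 2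
          = (A - B) * ((U i i₀ * (∑ i', U i' i₀ * 1)) * (U j i₀ * (∑ i', U i' i₀ * 1))) := by
            ring
        _ = A - B := by rw [hrec i, hrec j]; ring
    obtain ⟨a, b, hab⟩ : ∃ a b : Fin n, G.Adj a b := by
      have h01 : (⟨0, by omega⟩ : Fin n) ≠ ⟨1, by omega⟩ := by simp [Fin.ext_iff]
      obtain ⟨w⟩ := hG.preconnected ⟨0, by omega⟩ ⟨1, by omega⟩
      cases w with
      | cons h p => exact ⟨_, _, h⟩
    have hadj : RDa α G a b = 1 - α := by
      rw [RDa_apply_ne α hab.ne, SimpleGraph.dist_eq_one_iff_adj.mpr hab]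
      norm_num
    have hall : ∀ i j : Fin n, i ≠ j → G.Adj i j := by
      intro i j hij
      have hsq : ((∑ i', U i' i₀ * 1) ^ 2 : ℝ) ≠ 0 := pow_ne_zero _ hyne
      have h3 : RDa α G i j = RDa α G a b :=
        mul_right_cancel₀ hsq ((hMc i j hij).trans (hMc a b hab.ne).symm)
      rw [hadj, RDa_apply_ne α hij] at h3
      have hne1 : (1:ℝ) - α ≠ 0 := by linarith
      have h5 : (1 - α) * ((1:ℝ) / (G.dist i j : ℝ)) = (1 - α) * 1 := by
        rw [mul_one]; exact h3
      have h4 := mul_left_cancel₀ hne1 h5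
      rw [one_div, inv_eq_one] at h4
      have h6 : G.dist i j = 1 := by exact_mod_cast h4
      exact SimpleGraph.dist_eq_one_iff_adj.mp h6
    ext i j
    simp only [SimpleGraph.top_adj]
    exact ⟨fun h => h.ne, fun h => hall i j h⟩
  · -- complete implies equality
    intro hGtop
    have hdist1 : ∀ i j : Fin n, i ≠ j → G.dist i j = 1 := by
      intro i j hij
      rw [hGtop]
      exact SimpleGraph.dist_eq_one_iff_adj.mpr (by simpa using hij)
    have hRTr : ∀ i, RTr G i = (n:ℝ) - 1 := by
      intro i
      have h0 : ∀ j, RD G i j = (1:ℝ) - (if i = j then 1 else 0) := by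
        intro j
        rw [RD_apply]
        by_cases h : i = j
        · simp [h]
        · rw [if_neg h, if_neg h, hdist1 i j h]
          norm_num
      rw [RTr, Finset.sum_congr rfl fun j _ => h0 j, Finset.sum_sub_distrib,
        Finset.sum_const, Finset.sum_ite_eq univ i (fun _ => (1:ℝ)), if_pos (Finset.mem_univ i),
        Finset.card_univ, Fintype.card_fin, nsmul_eq_mul, mul_one]
    have hTval : T = (n:ℝ) * ((n:ℝ) - 1) := by
      rw [hTdef, Finset.sum_congr rfl fun i _ => hRTr i, Finset.sum_const,
        Finset.card_univ, Fintype.card_fin, nsmul_eq_mul]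
    have hdich : ∀ k, μ k = (n:ℝ) - 1 ∨ μ k = α * n - 1 := by
      intro k
      have hv := hH.mulVec_eigenvectorBasis k
      rw [← hμdef] at hv
      set v : Fin n → ℝ := ⇑(hH.eigenvectorBasis k) with hvdef
      set s : ℝ := ∑ i, v i with hsdef
      have hvne : ∃ i, v i ≠ 0 := by
        by_contra h
        push_neg at h
        refine hH.eigenvectorBasis.orthonormal.ne_zero k ?_
        ext i
        exact h i
      have hrow : ∀ i, μ k * v i = (α * n - 1) * v i + (1 - α) * s := by
        intro i
        have h1 := congrFun hv i
        have h2 : ∀ j, RDa α G i j * v j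
            = (1 - α) * v j + (if j = i then (α * (n:ℝ) - α - (1 - α)) * v j else 0) := by
          intro j
          by_cases hji : j = i
          · subst hji
            rw [RDa_apply_eq, hRTr]
            simp
            ring
          · rw [RDa_apply_ne α (Ne.symm hji), hdist1 i j (Ne.symm hji), if_neg hji]
            norm_num
        have h3 : (RDa α G *ᵥ v) i = ∑ j, RDa α G i j * v j := rfl
        rw [h3, Finset.sum_congr rfl fun j _ => h2 j, Finset.sum_add_distrib,
          ← Finset.mul_sum, ← hsdef, Finset.sum_ite_eq' univ i
            (fun j => (α * (n:ℝ) - α - (1 - α)) * v j), if_pos (Finset.mem_univ i)] at h1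
        have h4 : (μ k • v) i = μ k * v i := rfl
        rw [h4] at h1
        rw [← h1]
        ring
      have hsum : μ k * s = ((n:ℝ) - 1) * s := by
        have h := Finset.sum_congr rfl fun i (_ : i ∈ univ) => hrow i
        rw [← Finset.mul_sum, ← hsdef, Finset.sum_add_distrib, ← Finset.mul_sum, ← hsdef,
          Finset.sum_const, Finset.card_univ, Fintype.card_fin, nsmul_eq_mul] at h
        rw [h]
        ring
      by_cases hs : s = 0
      · right
        obtain ⟨i, hvi⟩ := hvne
        have h5 := hrow i
        rw [hs, mul_zero, add_zero] at h5
        have h6 : (μ k - (α * n - 1)) * v i = 0 := by linear_combination h5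
        rcases mul_eq_zero.mp h6 with h | h
        · linarith [sub_eq_zero.mp h]
        · exact absurd h hvi
      · left
        exact mul_right_cancel₀ hs hsum
    have hub : ∀ k, μ k ≤ (n:ℝ) - 1 := by
      intro k
      rcases hdich k with h | h <;> rw [h] <;> nlinarith
    have hlb : ∀ k, α * n - 1 ≤ μ k := by
      intro k
      rcases hdich k with h | h <;> rw [h] <;> nlinarith
    have htr2 : ∑ k, μ k = α * ((n:ℝ) * ((n:ℝ) - 1)) := by rw [htr, hTval]
    have hex1 : ∃ k, μ k = (n:ℝ) - 1 := by
      by_contra h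
      push_neg at h
      have hall : ∀ k, μ k = α * n - 1 := fun k => (hdich k).resolve_left (h k)
      have h7 : ∑ k, μ k = (n:ℝ) * (α * n - 1) := by
        rw [Finset.sum_congr rfl fun k _ => hall k, Finset.sum_const,
          Finset.card_univ, Fintype.card_fin, nsmul_eq_mul]
      rw [htr2] at h7
      nlinarith
    have hex2 : ∃ k, μ k = α * n - 1 := by
      by_contra h
      push_neg at h
      have hall : ∀ k, μ k = (n:ℝ) - 1 := fun k => (hdich k).resolve_right (h k)
      have h7 : ∑ k, μ k = (n:ℝ) * ((n:ℝ) - 1) := by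
        rw [Finset.sum_congr rfl fun k _ => hall k, Finset.sum_const,
          Finset.card_univ, Fintype.card_fin, nsmul_eq_mul]
      rw [htr2] at h7
      nlinarith
    have hmax : A = (n:ℝ) - 1 := by
      obtain ⟨k, hk⟩ := hex1
      exact le_antisymm (ciSup_le hub) (hk ▸ le_ciSup hbddA k)
    have hmin2 : B = α * n - 1 := by
      obtain ⟨k, hk⟩ := hex2
      exact le_antisymm (hk ▸ ciInf_le hbddB k) (le_ciInf hlb)
    have hsp : spread hH = A - B := rfl
    rw [hsp, hmax, hmin2, hhar, hTval]
    field_simp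
    ring
end

section
/- (Weyl's inequalities) Let A, B be Hermitian n×n matrices and C = A + B, with eigenvalues indexed in decreasing order. If n ≥ j ≥ i ≥ 1 then λ_i(C) ≥ λ_j(A) + λ_{i-j+n}(B), and if n ≥ i ≥ j ≥ 1 then λ_i(C) ≤ λ_j(A) + λ_{i-j+1}(B). -/
open Matrix

open Submodule Module FiniteDimensional
open scoped InnerProductSpace ComplexConjugate

namespace WeylAux

variable {n : ℕ} {M : Matrix (Fin n) (Fin n) ℂ}

/-- Eigenbasis reindexed so eigenvalues come in increasing order. -/
noncomputable def sb (hM : M.IsHermitian) :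
    OrthonormalBasis (Fin n) ℂ (EuclideanSpace ℂ (Fin n)) :=
  hM.eigenvectorBasis.reindex (Tuple.sort hM.eigenvalues).symm

/-- Eigenvalues in increasing order. -/
noncomputable def sμ (hM : M.IsHermitian) (k : Fin n) : ℝ :=
  hM.eigenvalues (Tuple.sort hM.eigenvalues k)

lemma sμ_mono (hM : M.IsHermitian) : Monotone (sμ hM) :=
  Tuple.monotone_sort hM.eigenvalues

lemma apply_sb (hM : M.IsHermitian) (k : Fin n) :
    Matrix.toEuclideanLin M (sb hM k) = (sμ hM k : ℂ) • sb hM k := by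
  have h := hM.mulVec_eigenvectorBasis (Tuple.sort hM.eigenvalues k)
  have : (sb hM k : EuclideanSpace ℂ (Fin n)) =
      hM.eigenvectorBasis (Tuple.sort hM.eigenvalues k) := by
    simp [sb]
  rw [this]
  apply_fun (WithLp.equiv 2 (Fin n → ℂ))
  ext i
  have := congrFun h i
  simpa [sμ, Complex.real_smul] using this

lemma inner_sb_apply (hM : M.IsHermitian) (k : Fin n) (x : EuclideanSpace ℂ (Fin n)) :
    ⟪sb hM k, Matrix.toEuclideanLin M x⟫_ℂ = (sμ hM k : ℂ) * ⟪sb hM k, x⟫_ℂ := by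
  have hsym := (isHermitian_iff_isSymmetric.1 hM)
  rw [← hsym (sb hM k) x, apply_sb, inner_smul_left]
  simp

lemma quad_eq (hM : M.IsHermitian) (x : EuclideanSpace ℂ (Fin n)) :
    (⟪x, Matrix.toEuclideanLin M x⟫_ℂ).re = ∑ k, sμ hM k * ‖⟪sb hM k, x⟫_ℂ‖ ^ 2 := by
  rw [← (sb hM).sum_inner_mul_inner x (Matrix.toEuclideanLin M x)]
  rw [Complex.re_sum]
  congr 1; ext k
  rw [inner_sb_apply]
  have h1 : ⟪x, sb hM k⟫_ℂ = (starRingEnd ℂ) ⟪sb hM k, x⟫_ℂ := (inner_conj_symm x _).symm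
  rw [h1]
  have h2 : (starRingEnd ℂ) ⟪sb hM k, x⟫_ℂ * ((sμ hM k : ℂ) * ⟪sb hM k, x⟫_ℂ)
      = (sμ hM k : ℂ) * ((Complex.normSq ⟪sb hM k, x⟫_ℂ : ℝ) : ℂ) := by
    rw [← Complex.mul_conj]; ring
  rw [h2, ← Complex.ofReal_mul, Complex.ofReal_re, Complex.normSq_eq_norm_sq]

lemma norm_sq_eq (hM : M.IsHermitian) (x : EuclideanSpace ℂ (Fin n)) :
    ‖x‖ ^ 2 = ∑ k, ‖⟪sb hM k, x⟫_ℂ‖ ^ 2 := by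
  have h := (sb hM).sum_inner_mul_inner x x
  have h2 : (⟪x, x⟫_ℂ).re = ‖x‖ ^ 2 := by
    rw [← RCLike.re_to_complex]
    exact inner_self_eq_norm_sq (𝕜 := ℂ) x
  rw [← h2, ← h, Complex.re_sum]
  congr 1; ext k
  have h1 : ⟪x, sb hM k⟫_ℂ = (starRingEnd ℂ) ⟪sb hM k, x⟫_ℂ := (inner_conj_symm x _).symm
  rw [h1]
  have h2 : (starRingEnd ℂ) ⟪sb hM k, x⟫_ℂ * ⟪sb hM k, x⟫_ℂ
      = ((Complex.normSq ⟪sb hM k, x⟫_ℂ : ℝ) : ℂ) := by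
    rw [← Complex.mul_conj]; ring
  rw [h2, Complex.ofReal_re, Complex.normSq_eq_norm_sq]

lemma inner_eq_zero_of_mem_span (hM : M.IsHermitian) {s : Set (Fin n)}
    {x : EuclideanSpace ℂ (Fin n)} (hx : x ∈ span ℂ (sb hM '' s)) {k : Fin n} (hk : k ∉ s) :
    ⟪sb hM k, x⟫_ℂ = 0 := by
  induction hx using Submodule.span_induction with
  | mem y hy =>
    obtain ⟨j, hj, rfl⟩ := hy
    exact (sb hM).orthonormal.2 (fun h => hk (h ▸ hj))
  | zero => simp
  | add y z _ _ hy hz => rw [inner_add_right, hy, hz, add_zero]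
  | smul a y _ hy => rw [inner_smul_right, hy, mul_zero]

lemma quad_le (hM : M.IsHermitian) {m : Fin n} {x : EuclideanSpace ℂ (Fin n)}
    (hx : x ∈ span ℂ (sb hM '' Set.Iic m)) :
    (⟪x, Matrix.toEuclideanLin M x⟫_ℂ).re ≤ sμ hM m * ‖x‖ ^ 2 := by
  rw [quad_eq, norm_sq_eq hM x, Finset.mul_sum]
  apply Finset.sum_le_sum
  intro k _
  by_cases hk : k ≤ m
  · exact mul_le_mul_of_nonneg_right (sμ_mono hM hk) (by positivity)
  · rw [inner_eq_zero_of_mem_span hM hx (by simpa using hk)]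
    simp

lemma le_quad (hM : M.IsHermitian) {m : Fin n} {x : EuclideanSpace ℂ (Fin n)}
    (hx : x ∈ span ℂ (sb hM '' Set.Ici m)) :
    sμ hM m * ‖x‖ ^ 2 ≤ (⟪x, Matrix.toEuclideanLin M x⟫_ℂ).re := by
  rw [quad_eq, norm_sq_eq hM x, Finset.mul_sum]
  apply Finset.sum_le_sum
  intro k _
  by_cases hk : m ≤ k
  · exact mul_le_mul_of_nonneg_right (sμ_mono hM hk) (by positivity)
  · rw [inner_eq_zero_of_mem_span hM hx (by simpa using hk)]
    simp

lemma finrank_span_finset (hM : M.IsHermitian) (s : Finset (Fin n)) :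
    finrank ℂ (span ℂ (sb hM '' ↑s)) = s.card := by
  have hli : LinearIndependent ℂ (fun k : (↑s : Set (Fin n)) => (sb hM k : EuclideanSpace ℂ (Fin n))) :=
    (sb hM).orthonormal.linearIndependent.comp _ Subtype.val_injective
  rw [Set.image_eq_range, finrank_span_eq_card hli]
  simp

lemma exists_triple (S1 S2 S3 : Submodule ℂ (EuclideanSpace ℂ (Fin n)))
    (h : 2 * n < finrank ℂ S1 + finrank ℂ S2 + finrank ℂ S3) :
    ∃ x : EuclideanSpace ℂ (Fin n), x ≠ 0 ∧ x ∈ S1 ∧ x ∈ S2 ∧ x ∈ S3 := by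
  have hE : finrank ℂ (EuclideanSpace ℂ (Fin n)) = n := finrank_euclideanSpace_fin
  have h12 : finrank ℂ S1 + finrank ℂ S2 ≤ finrank ℂ ↥(S1 ⊓ S2) + n := by
    have := Submodule.finrank_sup_add_finrank_inf_eq S1 S2
    have hle : finrank ℂ ↥(S1 ⊔ S2) ≤ n := (Submodule.finrank_le _).trans hE.le
    omega
  have h123 : finrank ℂ ↥(S1 ⊓ S2) + finrank ℂ S3 ≤ finrank ℂ ↥(S1 ⊓ S2 ⊓ S3) + n := by
    have := Submodule.finrank_sup_add_finrank_inf_eq (S1 ⊓ S2) S3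
    have hle : finrank ℂ ↥((S1 ⊓ S2) ⊔ S3) ≤ n := (Submodule.finrank_le _).trans hE.le
    omega
  have hpos : 0 < finrank ℂ ↥(S1 ⊓ S2 ⊓ S3) := by omega
  have hne : S1 ⊓ S2 ⊓ S3 ≠ ⊥ := by
    intro hbot
    rw [hbot, finrank_bot] at hpos
    exact lt_irrefl 0 hpos
  obtain ⟨x, hx, hx0⟩ := Submodule.exists_mem_ne_zero_of_ne_bot hne
  exact ⟨x, hx0, hx.1.1, hx.1.2, hx.2⟩

lemma weyl_asc₁ {n : ℕ} {A B : Matrix (Fin n) (Fin n) ℂ}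
    (hA : A.IsHermitian) (hB : B.IsHermitian) (hC : (A + B).IsHermitian)
    (a b c : Fin n) (h : (a : ℕ) + b = c) :
    sμ hA a + sμ hB b ≤ sμ hC c := by
  obtain ⟨x, hx0, hxA, hxB, hxC⟩ := exists_triple
      (span ℂ (sb hA '' Set.Ici a)) (span ℂ (sb hB '' Set.Ici b))
      (span ℂ (sb hC '' Set.Iic c)) (by
    rw [← Finset.coe_Ici, ← Finset.coe_Ici, ← Finset.coe_Iic,
      finrank_span_finset, finrank_span_finset, finrank_span_finset,
      Fin.card_Ici, Fin.card_Ici, Fin.card_Iic]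
    have := a.isLt; have := b.isLt; have := c.isLt
    omega)
  have hN : (0:ℝ) < ‖x‖ ^ 2 := by
    have : 0 < ‖x‖ := norm_pos_iff.mpr hx0
    positivity
  have hsplit : (⟪x, Matrix.toEuclideanLin (A + B) x⟫_ℂ).re
      = (⟪x, Matrix.toEuclideanLin A x⟫_ℂ).re + (⟪x, Matrix.toEuclideanLin B x⟫_ℂ).re := by
    rw [map_add, LinearMap.add_apply, inner_add_right, Complex.add_re]
  have h1 := le_quad hA hxA
  have h2 := le_quad hB hxB
  have h3 := quad_le hC hxC
  have hkey : (sμ hA a + sμ hB b) * ‖x‖ ^ 2 ≤ sμ hC c * ‖x‖ ^ 2 := by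
    rw [add_mul]; linarith
  exact le_of_mul_le_mul_right hkey hN

lemma weyl_asc₂ {n : ℕ} {A B : Matrix (Fin n) (Fin n) ℂ}
    (hA : A.IsHermitian) (hB : B.IsHermitian) (hC : (A + B).IsHermitian)
    (a b c : Fin n) (h : (a : ℕ) + b = c + (n - 1)) :
    sμ hC c ≤ sμ hA a + sμ hB b := by
  obtain ⟨x, hx0, hxA, hxB, hxC⟩ := exists_triple
      (span ℂ (sb hA '' Set.Iic a)) (span ℂ (sb hB '' Set.Iic b))
      (span ℂ (sb hC '' Set.Ici c)) (by
    rw [← Finset.coe_Iic, ← Finset.coe_Iic, ← Finset.coe_Ici,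
      finrank_span_finset, finrank_span_finset, finrank_span_finset,
      Fin.card_Iic, Fin.card_Iic, Fin.card_Ici]
    have := a.isLt; have := b.isLt; have := c.isLt
    omega)
  have hN : (0:ℝ) < ‖x‖ ^ 2 := by
    have : 0 < ‖x‖ := norm_pos_iff.mpr hx0
    positivity
  have hsplit : (⟪x, Matrix.toEuclideanLin (A + B) x⟫_ℂ).re
      = (⟪x, Matrix.toEuclideanLin A x⟫_ℂ).re + (⟪x, Matrix.toEuclideanLin B x⟫_ℂ).re := by
    rw [map_add, LinearMap.add_apply, inner_add_right, Complex.add_re]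
  have h1 := quad_le hA hxA
  have h2 := quad_le hB hxB
  have h3 := le_quad hC hxC
  have hkey : sμ hC c * ‖x‖ ^ 2 ≤ (sμ hA a + sμ hB b) * ‖x‖ ^ 2 := by
    rw [add_mul]; linarith
  exact le_of_mul_le_mul_right hkey hN

end WeylAux

/-- Eigenvalues of a Hermitian matrix listed in decreasing order:
`eigDesc hM 0 ≥ eigDesc hM 1 ≥ ⋯ ≥ eigDesc hM (n-1)`. -/
noncomputable def eigDesc {n : ℕ} {M : Matrix (Fin n) (Fin n) ℂ} (hM : M.IsHermitian)
    (k : Fin n) : ℝ :=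
  hM.eigenvalues (Tuple.sort hM.eigenvalues k.rev)

lemma eigDesc_eq_sμ {n : ℕ} {M : Matrix (Fin n) (Fin n) ℂ} (hM : M.IsHermitian) (k : Fin n) :
    eigDesc hM k = WeylAux.sμ hM k.rev := rfl

/-- **Weyl's inequalities.** For Hermitian `A, B` and `C = A + B`, with eigenvalues in
decreasing order (0-indexed): if `i ≤ j` then `λ_i(C) ≥ λ_j(A) + λ_{i-j+n-1}(B)`, and if
`j ≤ i` then `λ_i(C) ≤ λ_j(A) + λ_{i-j}(B)`. -/
theorem weyl_inequalities {n : ℕ} (A B : Matrix (Fin n) (Fin n) ℂ)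
    (hA : A.IsHermitian) (hB : B.IsHermitian) (hC : (A + B).IsHermitian) (i j : Fin n) :
    (∀ h : (i : ℕ) ≤ j, eigDesc hA j +
        eigDesc hB ⟨(i : ℕ) + (n - 1) - j,
          by have := i.isLt; have := j.isLt; omega⟩ ≤ eigDesc hC i) ∧
    (∀ h : (j : ℕ) ≤ i, eigDesc hC i ≤ eigDesc hA j +
        eigDesc hB ⟨(i : ℕ) - j, by have := i.isLt; omega⟩) := by
  have hi := i.isLt; have hj := j.isLt
  constructor
  · intro h
    rw [eigDesc_eq_sμ, eigDesc_eq_sμ, eigDesc_eq_sμ]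
    exact WeylAux.weyl_asc₁ hA hB hC _ _ _ (by simp only [Fin.val_rev]; omega)
  · intro h
    rw [eigDesc_eq_sμ, eigDesc_eq_sμ, eigDesc_eq_sμ]
    exact WeylAux.weyl_asc₂ hA hB hC _ _ _ (by simp only [Fin.val_rev]; omega)
end

section
/- Let G be a connected graph on n ≥ 3 vertices with clique number ω (2 ≤ ω ≤ n-1), Harary index H, and let G₀ be a clique of G on ω vertices with s = ∑_{v∈V(G₀)} RTr(v). Define c₁₁ = (αs + (1-α)ω(ω-1))/ω, c₁₂ = (1-α)(s - ω(ω-1))/ω, c₂₁ = (1-α)(s - ω(ω-1))/(n-ω), c₂₂ = (α(2H-s) + (1-α)(2H-2s+ω(ω-1)))/(n-ω). Then S_{RD_α}(G) ≥ ((c₁₁+c₂₂)² - 4(c₁₁c₂₂ - c₁₂c₂₁))^{1/2}. -/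
/-!
Let `u`, `w` be the indicator vectors of `K` and of its complement, `p = u ⬝ᵥ u`, `q = w ⬝ᵥ w`,
and `a, b, d` the values of the bilinear form of `A = RD_α(G)` on `(u,u)`, `(u,w)`, `(w,w)`; then
`c₁₁ = a/p`, `c₁₂ = b/p`, `c₂₁ = b/q`, `c₂₂ = d/q`. Cauchy–Schwarz for the positive semidefinite
forms `λ_max • 1 - A` and `A - λ_min • 1` on `u, w` gives `b² ≤ (λ_max p - a)(λ_max q - d)` and
`b² ≤ (a - λ_min p)(d - λ_min q)`, so both roots of `(a - μ p)(d - μ q) = b²`, the eigenvalues of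
`(cᵢⱼ)`, lie in `[λ_min, λ_max]`. The entries are computed from row sums of `RD(G)`, all distances
inside `K` being `1`.
-/

open Matrix BigOperators Finset

variable {V : Type*} [Fintype V] [DecidableEq V]

open scoped ComplexOrder
open Unitary

section Spectral

variable {𝕜 : Type*} [RCLike 𝕜]

theorem Matrix.IsHermitian.sub_smul_one_eq_conj {A : Matrix V V 𝕜} (hA : A.IsHermitian) (c : ℝ) :
    A - (c : 𝕜) • 1 = conjStarAlgAut 𝕜 _ hA.eigenvectorUnitary
      (diagonal (RCLike.ofReal ∘ fun i => hA.eigenvalues i - c)) := by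
  conv_lhs => rw [hA.spectral_theorem]
  rw [← map_one (conjStarAlgAut 𝕜 _ hA.eigenvectorUnitary), ← map_smul, ← map_sub]
  congr 1
  ext i j
  by_cases h : i = j <;> simp [h, diagonal, Algebra.algebraMap_eq_smul_one, sub_smul]

theorem Matrix.IsHermitian.posSemidef_sub_smul_one {A : Matrix V V 𝕜} (hA : A.IsHermitian)
    {c : ℝ} (hc : ∀ i, c ≤ hA.eigenvalues i) : (A - (c : 𝕜) • 1).PosSemidef := by
  rw [hA.sub_smul_one_eq_conj, conjStarAlgAut_apply,
    isUnit_coe.posSemidef_star_right_conjugate_iff, posSemidef_diagonal_iff]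
  intro i
  simpa using hc i

theorem Matrix.IsHermitian.posSemidef_smul_one_sub {A : Matrix V V 𝕜} (hA : A.IsHermitian)
    {c : ℝ} (hc : ∀ i, hA.eigenvalues i ≤ c) : ((c : 𝕜) • 1 - A).PosSemidef := by
  rw [← neg_sub, hA.sub_smul_one_eq_conj, ← map_neg, conjStarAlgAut_apply,
    isUnit_coe.posSemidef_star_right_conjugate_iff, diagonal_neg, posSemidef_diagonal_iff]
  intro i
  simpa using hc i

end Spectral

section CauchySchwarz

variable {ι : Type*} [Fintype ι]

theorem Matrix.PosSemidef.dotProduct_mulVec_sq_le {B : Matrix ι ι ℝ} (hB : B.PosSemidef)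
    (u w : ι → ℝ) : (u ⬝ᵥ B *ᵥ w) ^ 2 ≤ (u ⬝ᵥ B *ᵥ u) * (w ⬝ᵥ B *ᵥ w) := by
  have hsymm : w ⬝ᵥ B *ᵥ u = u ⬝ᵥ B *ᵥ w := by
    rw [dotProduct_mulVec, ← mulVec_transpose, ← conjTranspose_eq_transpose_of_trivial,
      hB.isHermitian.eq, dotProduct_comm]
  have hquad : ∀ x : ℝ,
      0 ≤ (u ⬝ᵥ B *ᵥ u) * (x * x) + 2 * (u ⬝ᵥ B *ᵥ w) * x + w ⬝ᵥ B *ᵥ w := fun x => by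
    have := hB.dotProduct_mulVec_nonneg (x • u + w)
    simp only [star_trivial, mulVec_add, mulVec_smul, dotProduct_add, add_dotProduct,
      dotProduct_smul, smul_dotProduct, smul_eq_mul, hsymm] at this
    linarith
  have := discrim_le_zero hquad
  rw [discrim] at this
  linarith

end CauchySchwarz

theorem Real.sqrt_sq_sub_add_le {p q X Y b : ℝ} (hp : 0 ≤ p) (hq : 0 ≤ q) (hX : 0 ≤ X)
    (hY : 0 ≤ Y) (hb : b ^ 2 ≤ X * Y) :
    √((q * X - p * Y) ^ 2 + 4 * p * q * b ^ 2) ≤ q * X + p * Y := by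
  rw [Real.sqrt_le_iff]
  constructor
  · positivity
  · -- `(qX + pY)² - (qX - pY)² = 4pqXY`
    nlinarith [mul_nonneg hp hq]

theorem minEig_le_eigenvalues {A : Matrix V V ℝ} (hA : A.IsHermitian) (i : V) :
    minEig hA ≤ hA.eigenvalues i :=
  ciInf_le (Set.finite_range _).bddBelow i

theorem eigenvalues_le_maxEig {A : Matrix V V ℝ} (hA : A.IsHermitian) (i : V) :
    hA.eigenvalues i ≤ maxEig hA :=
  le_ciSup (Set.finite_range _).bddAbove i

theorem sqrt_discr_le_mul_spread {A : Matrix V V ℝ} (hA : A.IsHermitian) {u w : V → ℝ}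
    (huw : u ⬝ᵥ w = 0) :
    √(((u ⬝ᵥ u) * (w ⬝ᵥ A *ᵥ w) - (w ⬝ᵥ w) * (u ⬝ᵥ A *ᵥ u)) ^ 2
        + 4 * (u ⬝ᵥ u) * (w ⬝ᵥ w) * (u ⬝ᵥ A *ᵥ w) ^ 2)
      ≤ (u ⬝ᵥ u) * (w ⬝ᵥ w) * spread hA := by
  have hmax := hA.posSemidef_smul_one_sub (eigenvalues_le_maxEig hA)
  have hmin := hA.posSemidef_sub_smul_one (minEig_le_eigenvalues hA)
  have hmax_uu := hmax.dotProduct_mulVec_nonneg u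
  have hmax_ww := hmax.dotProduct_mulVec_nonneg w
  have hmin_uu := hmin.dotProduct_mulVec_nonneg u
  have hmin_ww := hmin.dotProduct_mulVec_nonneg w
  have hmax_uw := hmax.dotProduct_mulVec_sq_le u w
  have hmin_uw := hmin.dotProduct_mulVec_sq_le u w
  simp only [star_trivial, sub_mulVec, smul_mulVec, one_mulVec, dotProduct_sub, dotProduct_smul,
    smul_eq_mul, RCLike.ofReal_real_eq_id, id, huw, mul_zero, zero_sub, sub_zero, neg_sq]
    at hmax_uu hmax_ww hmin_uu hmin_ww hmax_uw hmin_uw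
  have hp : 0 ≤ u ⬝ᵥ u := by simpa using dotProduct_star_self_nonneg u
  have hq : 0 ≤ w ⬝ᵥ w := by simpa using dotProduct_star_self_nonneg w
  set p := u ⬝ᵥ u
  set q := w ⬝ᵥ w
  set a := u ⬝ᵥ A *ᵥ u
  set d := w ⬝ᵥ A *ᵥ w
  have hupper := Real.sqrt_sq_sub_add_le hp hq hmax_uu hmax_ww hmax_uw
  have hlower := Real.sqrt_sq_sub_add_le hp hq hmin_uu hmin_ww hmin_uw
  rw [show q * (maxEig hA * p - a) - p * (maxEig hA * q - d) = p * d - q * a by ring] at hupper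
  rw [show q * (a - minEig hA * p) - p * (d - minEig hA * q) = -(p * d - q * a) by ring,
    neg_sq] at hlower
  rw [spread]
  linarith

theorem sqrt_quotient_discr_le_spread {A : Matrix V V ℝ} (hA : A.IsHermitian) {u w : V → ℝ}
    {p q a b d : ℝ} (huw : u ⬝ᵥ w = 0) (hp : u ⬝ᵥ u = p) (hq : w ⬝ᵥ w = q)
    (ha : u ⬝ᵥ A *ᵥ u = a) (hb : u ⬝ᵥ A *ᵥ w = b) (hd : w ⬝ᵥ A *ᵥ w = d)
    (hp0 : 0 < p) (hq0 : 0 < q) :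
    √((a / p + d / q) ^ 2 - 4 * (a / p * (d / q) - b / p * (b / q))) ≤ spread hA := by
  have key := sqrt_discr_le_mul_spread hA huw
  rw [hp, hq, ha, hb, hd] at key
  have hdiscr : (a / p + d / q) ^ 2 - 4 * (a / p * (d / q) - b / p * (b / q))
      = ((p * d - q * a) ^ 2 + 4 * p * q * b ^ 2) / (p * q) ^ 2 := by
    field_simp
    ring
  rw [hdiscr, Real.sqrt_div' _ (by positivity), Real.sqrt_sq (by positivity),
    div_le_iff₀ (by positivity)]
  linarith

section Indicator

variable {ι R : Type*} [Fintype ι] [DecidableEq ι] [NonAssocSemiring R]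

theorem ite_mem_dotProduct_ite_mem (S T : Finset ι) :
    ((fun i => if i ∈ S then 1 else 0) ⬝ᵥ fun i => if i ∈ T then 1 else 0)
      = ((S ∩ T).card : R) := by
  simp [dotProduct, inter_comm]

theorem ite_mem_dotProduct_mulVec_ite_mem (M : Matrix ι ι R) (S T : Finset ι) :
    (fun i => if i ∈ S then 1 else 0) ⬝ᵥ M *ᵥ (fun j => if j ∈ T then 1 else 0)
      = ∑ i ∈ S, ∑ j ∈ T, M i j := by
  simp [dotProduct, mulVec, ite_mul, mul_ite, Finset.sum_ite_mem]

end Indicator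

section Distance

variable {W : Type*} [DecidableEq W]

theorem RD_comm (G : SimpleGraph W) (i j : W) : RD G i j = RD G j i := by
  simp only [RD, of_apply, eq_comm, SimpleGraph.dist_comm]

theorem sum_sum_RD_of_isClique {G : SimpleGraph W} {K : Finset W} (hK : G.IsClique K) :
    ∑ i ∈ K, ∑ j ∈ K, RD G i j = (K.card : ℝ) * (K.card - 1) := by
  have hrow : ∀ i ∈ K, ∑ j ∈ K, RD G i j = (K.card : ℝ) - 1 := by
    intro i hi
    rw [← sum_erase_add _ _ hi, sum_congr rfl (g := fun _ => (1 : ℝ)), sum_const,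
      card_erase_of_mem hi, nsmul_one, Nat.cast_pred (card_pos.2 ⟨i, hi⟩)]
    · simp [RD]
    · intro j hj
      obtain ⟨hji, hjK⟩ := mem_erase.1 hj
      simp [RD, Ne.symm hji, SimpleGraph.dist_eq_one_iff_adj.2 (hK hi hjK (Ne.symm hji))]
  rw [sum_congr rfl hrow, sum_const, nsmul_eq_mul]

end Distance

theorem sum_RTr_compl (G : SimpleGraph V) (S : Finset V) :
    ∑ i ∈ Sᶜ, RTr G i = 2 * harary G - ∑ i ∈ S, RTr G i := by
  rw [harary, mul_div_cancel₀ _ two_ne_zero, ← sum_add_sum_compl S]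
  ring

theorem sum_sum_RD_compl (G : SimpleGraph V) (S T : Finset V) :
    ∑ i ∈ S, ∑ j ∈ Tᶜ, RD G i j = ∑ i ∈ S, RTr G i - ∑ i ∈ S, ∑ j ∈ T, RD G i j := by
  simp only [RTr, ← sum_add_sum_compl T, sum_add_distrib]
  ring

theorem sum_sum_RD_compl_compl (G : SimpleGraph V) (S : Finset V) :
    ∑ i ∈ Sᶜ, ∑ j ∈ Sᶜ, RD G i j
      = 2 * harary G - 2 * ∑ i ∈ S, RTr G i + ∑ i ∈ S, ∑ j ∈ S, RD G i j := by
  have hswap : ∑ i ∈ Sᶜ, ∑ j ∈ S, RD G i j = ∑ i ∈ S, ∑ j ∈ Sᶜ, RD G i j := by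
    rw [sum_comm (f := fun i j => RD G i j)]
    exact sum_congr rfl fun i _ => sum_congr rfl fun j _ => RD_comm G j i
  rw [sum_sum_RD_compl, sum_RTr_compl, hswap, sum_sum_RD_compl]
  ring

theorem sum_sum_RDa (α : ℝ) (G : SimpleGraph V) (S T : Finset V) :
    ∑ i ∈ S, ∑ j ∈ T, RDa α G i j
      = α * ∑ i ∈ S ∩ T, RTr G i + (1 - α) * ∑ i ∈ S, ∑ j ∈ T, RD G i j := by
  simp [RDa, diagonal, sum_add_distrib, mul_sum]

theorem RDa_spread_lower_clique_general {n : ℕ} (G : SimpleGraph (Fin n))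
    (α : ℝ)
    (hH : (RDa α G).IsHermitian)
    (ω : ℕ) (hω₁ : 2 ≤ ω) (hω₂ : ω ≤ n - 1)
    (K : Finset (Fin n)) (hK : G.IsNClique ω K)
    (s : ℝ) (hs : s = ∑ v ∈ K, RTr G v)
    (c₁₁ c₁₂ c₂₁ c₂₂ : ℝ)
    (hc₁₁ : c₁₁ = (α * s + (1 - α) * ω * (ω - 1)) / ω)
    (hc₁₂ : c₁₂ = (1 - α) * (s - ω * (ω - 1)) / ω)
    (hc₂₁ : c₂₁ = (1 - α) * (s - ω * (ω - 1)) / (n - ω))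
    (hc₂₂ : c₂₂ = (α * (2 * harary G - s) +
      (1 - α) * (2 * harary G - 2 * s + ω * (ω - 1))) / (n - ω)) :
    Real.sqrt ((c₁₁ + c₂₂) ^ 2 - 4 * (c₁₁ * c₂₂ - c₁₂ * c₂₁)) ≤ spread hH := by
  obtain ⟨hclique, hcard⟩ := hK
  have hωn : ω < n := by omega
  have hRD : ∑ i ∈ K, ∑ j ∈ K, RD G i j = ω * (ω - 1) := by
    rw [sum_sum_RD_of_isClique hclique, hcard]
  subst hc₁₁ hc₁₂ hc₂₁ hc₂₂ hs
  apply sqrt_quotient_discr_le_spread hH (u := fun i => if i ∈ K then 1 else 0)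
    (w := fun i => if i ∈ Kᶜ then 1 else 0)
  · rw [ite_mem_dotProduct_ite_mem, inter_compl, card_empty, Nat.cast_zero]
  · rw [ite_mem_dotProduct_ite_mem, inter_self, hcard]
  · rw [ite_mem_dotProduct_ite_mem, inter_self, card_compl, hcard, Fintype.card_fin,
      Nat.cast_sub hωn.le]
  · rw [ite_mem_dotProduct_mulVec_ite_mem, sum_sum_RDa, inter_self, hRD, mul_assoc]
  · rw [ite_mem_dotProduct_mulVec_ite_mem, sum_sum_RDa, inter_compl, sum_empty,
      sum_sum_RD_compl, hRD]
    ring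
  · rw [ite_mem_dotProduct_mulVec_ite_mem, sum_sum_RDa, inter_self, sum_RTr_compl,
      sum_sum_RD_compl_compl, hRD]
  · exact_mod_cast (by omega : 0 < ω)
  · rw [sub_pos]
    exact_mod_cast hωn

/-- Lower bound for the `RD_α`-spread of a graph with clique number `ω` via the quotient
matrix of the partition into a maximum clique and its complement (Theorem 2.15). -/
theorem RDa_spread_lower_clique {n : ℕ} (hn : 3 ≤ n) (G : SimpleGraph (Fin n))
    (hG : G.Connected) (α : ℝ) (hα : α ∈ Set.Icc (0 : ℝ) 1)
    (hH : (RDa α G).IsHermitian)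
    (ω : ℕ) (hω₁ : 2 ≤ ω) (hω₂ : ω ≤ n - 1) (hclique : G.cliqueNum = ω)
    (K : Finset (Fin n)) (hK : G.IsNClique ω K)
    (s : ℝ) (hs : s = ∑ v ∈ K, RTr G v)
    (c₁₁ c₁₂ c₂₁ c₂₂ : ℝ)
    (hc₁₁ : c₁₁ = (α * s + (1 - α) * ω * (ω - 1)) / ω)
    (hc₁₂ : c₁₂ = (1 - α) * (s - ω * (ω - 1)) / ω)
    (hc₂₁ : c₂₁ = (1 - α) * (s - ω * (ω - 1)) / (n - ω))
    (hc₂₂ : c₂₂ = (α * (2 * harary G - s) +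
      (1 - α) * (2 * harary G - 2 * s + ω * (ω - 1))) / (n - ω)) :
    Real.sqrt ((c₁₁ + c₂₂) ^ 2 - 4 * (c₁₁ * c₂₂ - c₁₂ * c₂₁)) ≤ spread hH :=
  RDa_spread_lower_clique_general G α hH ω hω₁ hω₂ K hK s hs c₁₁ c₁₂ c₂₁ c₂₂ hc₁₁ hc₁₂ hc₂₁ hc₂₂
end
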